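/- arXiv:1208.5168 — 6 statements merged into one kernel-verified Lean document; each statement's English description precedes it below -/
import Mathlib

section
/- Let X be a real square matrix and ω a real number. Then μ_∞[X] ≤ ω if and only if ‖e^{tX}‖_∞ ≤ e^{tω} for all t ≥ 0. -/
/-!
Shift `X` by `c • 1` with `c = ∑ i, |X i i|`, so that `Y = X + c • 1` has nonnegative diagonal.
Then `‖Y‖_∞ = μ_∞[X] + c`, `‖1 + t • Y‖_∞ = 1 + t ‖Y‖_∞` for `t ≥ 0`, and
`e^{tY} = e^{tc} e^{tX}`, so it suffices to show `‖Y‖ ≤ ω + c ↔ ∀ t ≥ 0, ‖e^{tY}‖ ≤ e^{t(ω + c)}`.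
Forward, `‖e^{tY}‖ ≤ e^{t‖Y‖}`. Conversely, `e^{tY} = 1 + t • Y + o(t)` and the norm is affine
along that ray, so `t ↦ ‖e^{tY}‖` has right derivative `‖Y‖` at `0`; it equals `e^{t(ω + c)}` at
`0` and stays below it, so `‖Y‖ ≤ ω + c`.
-/

/-- The maximum norm of a real matrix: `‖X‖_∞ = max_i Σ_j |X i j|`
(the operator norm induced by the maximum norm on vectors). -/
noncomputable def matMaxNorm {ι κ : Type*} [Fintype ι] [Fintype κ]
    (X : Matrix ι κ ℝ) : ℝ :=
  ⨆ i, ∑ j, |X i j|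

/-- The logarithmic maximum norm `μ_∞[X] = max_i ( x_{ii} + Σ_{j≠i} |x_{ij}| )`. -/
noncomputable def logMaxNorm {ι : Type*} [Fintype ι] [DecidableEq ι]
    (X : Matrix ι ι ℝ) : ℝ :=
  ⨆ i, (X i i + ∑ j ∈ Finset.univ.erase i, |X i j|)

open NormedSpace Set Asymptotics Finset

theorem HasDerivWithinAt.norm_of_norm_add_smul_eq {E : Type*} [NormedAddCommGroup E]
    [NormedSpace ℝ E] {F : ℝ → E} {v : E} {b x : ℝ} {s : Set ℝ} (hF : HasDerivWithinAt F v s x)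
    (hray : ∀ t ∈ s, ‖F x + (t - x) • v‖ = ‖F x‖ + (t - x) * b) :
    HasDerivWithinAt (fun t => ‖F t‖) b s x := by
  rw [hasDerivWithinAt_iff_isLittleO] at hF ⊢
  refine IsBigO.trans_isLittleO (IsBigO.of_bound 1 ?_) hF
  filter_upwards [self_mem_nhdsWithin] with t ht
  rw [one_mul, smul_eq_mul, sub_sub, ← hray t ht, sub_sub]
  exact abs_norm_sub_norm_le _ _

theorem HasDerivWithinAt.le_of_le_on_Ioi {f g : ℝ → ℝ} {f' g' a : ℝ}
    (hf : HasDerivWithinAt f f' (Ioi a) a) (hg : HasDerivWithinAt g g' (Ioi a) a)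
    (h0 : f a = g a) (hle : ∀ t > a, f t ≤ g t) : f' ≤ g' := by
  rw [hasDerivWithinAt_iff_tendsto_slope' (s := Ioi a) (lt_irrefl a)] at hf hg
  refine le_of_tendsto_of_tendsto hf hg ?_
  filter_upwards [self_mem_nhdsWithin] with t (ht : a < t)
  rw [slope_def_field, slope_def_field, h0]
  gcongr
  exact hle t ht

section NormedAlgebra

variable {𝔸 : Type*} [NormedRing 𝔸] [NormedAlgebra ℝ 𝔸]

theorem NormedSpace.norm_exp_le_exp_norm [NormOneClass 𝔸] (x : 𝔸) : ‖exp x‖ ≤ Real.exp ‖x‖ := by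
  rw [exp_eq_tsum ℝ, Real.exp_eq_exp_ℝ]
  refine tsum_of_norm_bounded (expSeries_div_hasSum_exp ‖x‖) fun k => ?_
  rw [norm_smul, div_eq_inv_mul, norm_inv, RCLike.norm_natCast]
  exact mul_le_mul_of_nonneg_left (norm_pow_le x k) (by positivity)

variable [CompleteSpace 𝔸]

theorem NormedSpace.exp_smul_add_smul_one (x : 𝔸) (t c : ℝ) :
    exp (t • (x + c • 1)) = Real.exp (t * c) • exp (t • x) := by
  have hball : ∀ y : 𝔸, y ∈ Metric.eball 0 (expSeries ℝ 𝔸).radius := fun y =>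
    (expSeries_radius_eq_top ℝ 𝔸).symm ▸ edist_lt_top _ _
  rw [smul_add, smul_smul, ← Algebra.algebraMap_eq_smul_one,
    exp_add_of_commute_of_mem_ball (Algebra.commutes _ _).symm (hball _) (hball _),
    ← algebraMap_exp_comm, Real.exp_eq_exp_ℝ, ← Algebra.commutes, ← Algebra.smul_def]

theorem norm_le_iff_forall_norm_exp_smul_le [NormOneClass 𝔸] {x : 𝔸}
    (hray : ∀ t : ℝ, 0 ≤ t → ‖1 + t • x‖ = 1 + t * ‖x‖) (ω : ℝ) :
    ‖x‖ ≤ ω ↔ ∀ t : ℝ, 0 ≤ t → ‖exp (t • x)‖ ≤ Real.exp (t * ω) := by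
  constructor
  · intro hx t ht
    calc ‖exp (t • x)‖ ≤ Real.exp ‖t • x‖ := norm_exp_le_exp_norm _
      _ ≤ Real.exp (t * ω) := by
        rw [norm_smul, Real.norm_of_nonneg ht]
        gcongr
  · intro h
    have hF : HasDerivWithinAt (fun t : ℝ => exp (t • x)) x (Ici 0) 0 := by
      simpa using (hasDerivAt_exp_smul_const x (0 : ℝ)).hasDerivWithinAt
    have hnorm : HasDerivWithinAt (fun t : ℝ => ‖exp (t • x)‖) ‖x‖ (Ioi 0) 0 :=
      (hF.norm_of_norm_add_smul_eq fun t ht => by simpa using hray t ht).Ioi_of_Ici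
    have hbound : HasDerivWithinAt (fun t => Real.exp (t * ω)) ω (Ioi 0) 0 := by
      simpa using ((hasDerivAt_id (0 : ℝ)).mul_const ω).exp.hasDerivWithinAt
    exact hnorm.le_of_le_on_Ioi hbound (by simp) fun t ht => h t ht.le

end NormedAlgebra

section Matrix

open scoped Matrix.Norms.Operator

theorem Matrix.linfty_opNorm_eq_matMaxNorm {ι κ : Type*} [Fintype ι] [Fintype κ]
    (A : Matrix ι κ ℝ) : ‖A‖ = matMaxNorm A := by
  rw [Matrix.linfty_opNorm_def, Finset.sup_univ_eq_ciSup, NNReal.coe_iSup, matMaxNorm]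
  push_cast
  rfl

variable {ι : Type*} [Fintype ι] [DecidableEq ι]

theorem matMaxNorm_eq_logMaxNorm {X : Matrix ι ι ℝ} (hX : ∀ i, 0 ≤ X i i) :
    matMaxNorm X = logMaxNorm X := by
  unfold matMaxNorm logMaxNorm
  refine iSup_congr fun i => ?_
  rw [← add_sum_erase _ _ (mem_univ i), abs_of_nonneg (hX i)]

theorem logMaxNorm_add_smul_one [Nonempty ι] (X : Matrix ι ι ℝ) (c : ℝ) :
    logMaxNorm (X + c • 1) = logMaxNorm X + c := by
  unfold logMaxNorm
  rw [ciSup_add (finite_range _).bddAbove]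
  refine iSup_congr fun i => ?_
  have hoff : ∀ j ∈ Finset.univ.erase i, |(X + c • 1) i j| = |X i j| := fun j hj => by
    simp [Matrix.one_apply_ne' (ne_of_mem_erase hj)]
  rw [sum_congr rfl hoff]
  simp only [Matrix.add_apply, Matrix.smul_apply, Matrix.one_apply_eq, smul_eq_mul, mul_one]
  ring

theorem logMaxNorm_smul {t : ℝ} (ht : 0 ≤ t) (X : Matrix ι ι ℝ) :
    logMaxNorm (t • X) = t * logMaxNorm X := by
  unfold logMaxNorm
  rw [Real.mul_iSup_of_nonneg ht]
  refine iSup_congr fun i => ?_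
  simp only [Matrix.smul_apply, smul_eq_mul, abs_mul, abs_of_nonneg ht, mul_add, mul_sum]

theorem Matrix.linfty_opNorm_one_add_smul [Nonempty ι] {Y : Matrix ι ι ℝ}
    (hY : ∀ i, 0 ≤ Y i i) {t : ℝ} (ht : 0 ≤ t) : ‖1 + t • Y‖ = 1 + t * ‖Y‖ := by
  have hdiag : ∀ i, 0 ≤ (1 + t • Y) i i := fun i => by
    simpa using add_nonneg zero_le_one (mul_nonneg ht (hY i))
  have hsplit : 1 + t • Y = t • Y + (1 : ℝ) • 1 := by rw [one_smul, add_comm]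
  rw [linfty_opNorm_eq_matMaxNorm, linfty_opNorm_eq_matMaxNorm, matMaxNorm_eq_logMaxNorm hY,
    matMaxNorm_eq_logMaxNorm hdiag, hsplit, logMaxNorm_add_smul_one, logMaxNorm_smul ht, add_comm]

theorem logMaxNorm_le_iff_forall_matMaxNorm_exp_smul_le [Nonempty ι] (X : Matrix ι ι ℝ)
    (ω : ℝ) : logMaxNorm X ≤ ω ↔
      ∀ t : ℝ, 0 ≤ t → matMaxNorm (exp (t • X)) ≤ Real.exp (t * ω) := by
  set c := ∑ i, |X i i|
  set Y := X + c • 1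
  have hdiag : ∀ i, 0 ≤ Y i i := fun i => by
    have hc : |X i i| ≤ c := single_le_sum (f := fun i => |X i i|) (fun _ _ => abs_nonneg _)
      (mem_univ i)
    simp only [Y, Matrix.add_apply, Matrix.smul_apply, Matrix.one_apply_eq, smul_eq_mul, mul_one]
    linarith [neg_abs_le (X i i)]
  have hnormY : ‖Y‖ = logMaxNorm X + c := by
    rw [Matrix.linfty_opNorm_eq_matMaxNorm, matMaxNorm_eq_logMaxNorm hdiag,
      logMaxNorm_add_smul_one]
  have hexpY : ∀ t : ℝ, ‖exp (t • Y)‖ = Real.exp (t * c) * matMaxNorm (exp (t • X)) := by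
    intro t
    calc ‖exp (t • Y)‖ = ‖Real.exp (t * c) • exp (t • X)‖ :=
          congrArg norm (exp_smul_add_smul_one X t c)
      _ = Real.exp (t * c) * matMaxNorm (exp (t • X)) := by
          rw [norm_smul, Real.norm_of_nonneg (Real.exp_pos _).le,
            Matrix.linfty_opNorm_eq_matMaxNorm]
  calc logMaxNorm X ≤ ω ↔ ‖Y‖ ≤ ω + c := by rw [hnormY, add_le_add_iff_right]
    _ ↔ ∀ t : ℝ, 0 ≤ t → ‖exp (t • Y)‖ ≤ Real.exp (t * (ω + c)) :=
      norm_le_iff_forall_norm_exp_smul_le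
        (fun _ ht => Matrix.linfty_opNorm_one_add_smul hdiag ht) _
    _ ↔ _ := by
      simp_rw [hexpY, mul_add, Real.exp_add, mul_comm (Real.exp (_ * ω)),
        mul_le_mul_iff_right₀ (Real.exp_pos _)]

end Matrix

/-- Let `X` be a real square matrix and `ω` a real number.  Then `μ_∞[X] ≤ ω` if and
only if `‖e^{tX}‖_∞ ≤ e^{tω}` for all `t ≥ 0`. -/
theorem statement0 {n : ℕ} (hn : 0 < n) (X : Matrix (Fin n) (Fin n) ℝ) (ω : ℝ) :
    logMaxNorm X ≤ ω ↔
      ∀ t : ℝ, 0 ≤ t → matMaxNorm (NormedSpace.exp (t • X)) ≤ Real.exp (t * ω) :=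
  have : Nonempty (Fin n) := ⟨⟨0, hn⟩⟩
  logMaxNorm_le_iff_forall_matMaxNorm_exp_smul_le X ω
end

section
/- For all t ≥ 0, ‖e^{tC}‖_∞ = e^{−rt} + (1 − e^{−rt})·2S/h. -/
/-- The `2×2` matrix both of whose rows equal `(−rS/h, r·s_{m+1}/h)`. -/
noncomputable def Cmat (r spen S h : ℝ) : Matrix (Fin 2) (Fin 2) ℝ :=
  Matrix.of fun _ j => if j = 0 then -(r * S) / h else r * spen / h

open Nat in
theorem IsIdempotentElem.exp_smul {A : Type*} [Ring A] [Algebra ℝ A] [TopologicalSpace A]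
    [IsTopologicalRing A] [T2Space A] [ContinuousSMul ℝ A] {p : A} (hp : IsIdempotentElem p)
    (s : ℝ) : NormedSpace.exp (s • p) = Real.exp s • p + (1 - p) := by
  have hterm (n : ℕ) :
      (n !⁻¹ : ℝ) • (s • p) ^ n = (s ^ n / n !) • p + if n = 0 then 1 - p else 0 := by
    rcases n with _ | n
    · simp
    · rw [smul_pow, hp.pow_succ_eq, smul_smul, if_neg n.succ_ne_zero, add_zero, inv_mul_eq_div]
  have hsum : HasSum (fun n : ℕ => (s ^ n / n !) • p + if n = 0 then 1 - p else 0)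
      (Real.exp s • p + (1 - p)) := by
    rw [Real.exp_eq_exp_ℝ]
    exact ((NormedSpace.expSeries_div_hasSum_exp s).smul_const p).add (hasSum_ite_eq 0 _)
  rw [NormedSpace.exp_eq_tsum ℝ]
  simp only [hterm]
  exact hsum.tsum_eq

theorem Matrix.isIdempotentElem_replicateRow {n R : Type*} [Fintype n] [Semiring R]
    {v : n → R} (hv : ∑ j, v j = 1) : IsIdempotentElem (replicateRow n v) := by
  ext i k
  simp only [mul_apply, replicateRow_apply, ← Finset.sum_mul, hv, one_mul]

theorem matMaxNorm_eq_of_forall_le {ι κ : Type*} [Fintype ι] [Nonempty ι] [Fintype κ]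
    (X : Matrix ι κ ℝ) {k : ι} (hk : ∀ i, ∑ j, |X i j| ≤ ∑ j, |X k j|) :
    matMaxNorm X = ∑ j, |X k j| :=
  le_antisymm (ciSup_le hk) (le_ciSup (f := fun i => ∑ j, |X i j|) (Set.finite_range _).bddAbove k)

theorem Cmat_eq_smul_replicateRow (r spen S h : ℝ) :
    Cmat r spen S h = (-r) • Matrix.replicateRow (Fin 2) ![S / h, -spen / h] := by
  ext i j
  fin_cases j <;> simp [Cmat, mul_div_assoc, neg_div]

theorem exp_smul_Cmat (r spen S : ℝ) (hne : spen ≠ S) (t : ℝ) :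
    NormedSpace.exp (t • Cmat r spen S (S - spen)) =
      1 - (1 - Real.exp (-(r * t))) •
        Matrix.replicateRow (Fin 2) ![S / (S - spen), -spen / (S - spen)] := by
  have hP : IsIdempotentElem (Matrix.replicateRow (Fin 2) ![S / (S - spen), -spen / (S - spen)]) :=
    Matrix.isIdempotentElem_replicateRow <| by
      rw [Fin.sum_univ_two, Matrix.cons_val_zero, Matrix.cons_val_one, Matrix.cons_val_zero,
        ← add_div, ← sub_eq_add_neg, div_self (sub_ne_zero.mpr hne.symm)]
  rw [Cmat_eq_smul_replicateRow, smul_smul, mul_neg, mul_comm, hP.exp_smul, sub_smul, one_smul]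
  abel

/-- For all `t ≥ 0`, `‖e^{tC}‖_∞ = e^{−rt} + (1 − e^{−rt})·2S/h`. -/
theorem statement3 (r spen S : ℝ) (hr : 0 < r) (hspen : 0 < spen) (hsS : spen < S)
    (C : Matrix (Fin 2) (Fin 2) ℝ) (hC : C = Cmat r spen S (S - spen)) :
    ∀ t : ℝ, 0 ≤ t →
      matMaxNorm (NormedSpace.exp (t • C)) =
        Real.exp (-(r * t)) + (1 - Real.exp (-(r * t))) * (2 * S / (S - spen)) := by
  intro t ht
  subst hC
  have hh : 0 < S - spen := sub_pos.mpr hsS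
  set E := Real.exp (-(r * t))
  have hE : 0 ≤ 1 - E := sub_nonneg.mpr <| Real.exp_le_one_iff.mpr (by nlinarith)
  set a := (1 - E) * (S / (S - spen))
  set b := (1 - E) * (spen / (S - spen))
  have ha : 0 ≤ a := mul_nonneg hE (div_nonneg (hspen.trans hsS).le hh.le)
  have hb : 0 ≤ b := mul_nonneg hE (div_nonneg hspen.le hh.le)
  set M : Matrix (Fin 2) (Fin 2) ℝ := !![1 - a, b; -a, 1 + b]
  have hexp : NormedSpace.exp (t • Cmat r spen S (S - spen)) = M := by
    rw [exp_smul_Cmat r spen S hsS.ne t]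
    ext i j
    fin_cases i <;> fin_cases j <;> simp [M, a, b, E, neg_div]
  have hrow0 : ∑ j, |M 0 j| = |1 - a| + b := by simp [M, Fin.sum_univ_two, abs_of_nonneg hb]
  have hrow1 : ∑ j, |M 1 j| = a + (1 + b) := by
    simp [M, Fin.sum_univ_two, abs_of_nonneg ha, abs_of_nonneg (by linarith : 0 ≤ 1 + b)]
  rw [hexp, matMaxNorm_eq_of_forall_le M (k := 1) ?_, hrow1]
  · simp only [a, b, E]
    field_simp
    ring
  · intro i
    fin_cases i
    · rw [Fin.zero_eta, hrow0, hrow1]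
      linarith [abs_sub (1 : ℝ) a, abs_one (α := ℝ), abs_of_nonneg ha]
    · exact le_rfl
end

section
/- If A is invertible, μ_∞[A] ≤ 0 and α_m + |β_m| < 0, then |A^{−1} e_m|_∞ ≤ 1/(−α_m − |β_m|), where e_m = (0,…,0,1)^T is the m-th standard unit vector of ℝ^m. -/
/-- Tridiagonal matrix with diagonal `α`, subdiagonal `β` and superdiagonal `γ`. -/
def tridiag {m : ℕ} (α β γ : Fin m → ℝ) : Matrix (Fin m) (Fin m) ℝ :=
  Matrix.of fun i j =>
    if (i : ℕ) = j then α i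
    else if (i : ℕ) = (j : ℕ) + 1 then β i
    else if (j : ℕ) = (i : ℕ) + 1 then γ i
    else 0

/-- The maximum norm of a real vector: `|v|_∞ = max_i |v i|`. -/
noncomputable def vecMaxNorm {ι : Type*} [Fintype ι] (v : ι → ℝ) : ℝ :=
  ⨆ i, |v i|

private lemma rowBound {n : ℕ} (B : Matrix (Fin n) (Fin n) ℝ) (x y : Fin n → ℝ)
    (hBx : B.mulVec x = y) (i : Fin n) (M : ℝ) (hM : ∀ j, |x j| ≤ M) :
    |B i i * x i| ≤ |y i| + ∑ j ∈ Finset.univ.erase i, |B i j| * M := by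
  have hsum : B i i * x i + ∑ j ∈ Finset.univ.erase i, B i j * x j = y i := by
    rw [Finset.add_sum_erase Finset.univ (fun j => B i j * x j) (Finset.mem_univ i), ← hBx]
    simp [Matrix.mulVec, dotProduct]
  have h1 : B i i * x i = y i - ∑ j ∈ Finset.univ.erase i, B i j * x j := by linarith
  rw [h1, sub_eq_add_neg]
  refine (abs_add_le _ _).trans ?_
  rw [abs_neg]
  gcongr
  refine (Finset.abs_sum_le_sum_abs _ _).trans ?_
  apply Finset.sum_le_sum
  intro j hj
  rw [abs_mul]
  exact mul_le_mul_of_nonneg_left (hM j) (abs_nonneg _)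

private lemma mulVecAbsLe {n : ℕ} (C : Matrix (Fin n) (Fin n) ℝ) (z : Fin n → ℝ) (c : ℝ)
    (hz : ∀ j, |z j| ≤ c) (i : Fin n) :
    |(C.mulVec z) i| ≤ (∑ j, |C i j|) * c := by
  have h0 : (C.mulVec z) i = ∑ j, C i j * z j := by
    simp [Matrix.mulVec, dotProduct]
  rw [h0, Finset.sum_mul]
  refine (Finset.abs_sum_le_sum_abs _ _).trans ?_
  apply Finset.sum_le_sum
  intro j _
  rw [abs_mul]
  exact mul_le_mul_of_nonneg_left (hz j) (abs_nonneg _)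

private lemma lastRowSum {m : ℕ} (α β γ : Fin (m+1) → ℝ) :
    ∑ j ∈ Finset.univ.erase (Fin.last m), |tridiag α β γ (Fin.last m) j|
      ≤ |β (Fin.last m)| := by
  rcases m with _ | k
  · have he : (Finset.univ.erase (Fin.last 0)) = (∅ : Finset (Fin 1)) := by decide
    rw [he, Finset.sum_empty]
    exact abs_nonneg _
  · have hmem : (⟨k, by omega⟩ : Fin (k+2)) ∈ Finset.univ.erase (Fin.last (k+1)) := by
      refine Finset.mem_erase.mpr ⟨?_, Finset.mem_univ _⟩
      simp [Fin.ext_iff]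
    rw [Finset.sum_eq_single_of_mem _ hmem ?_]
    · have hval : tridiag α β γ (Fin.last (k+1)) ⟨k, by omega⟩ = β (Fin.last (k+1)) := by
        unfold tridiag
        simp only [Matrix.of_apply, Fin.val_last, Fin.val_mk]
        rw [if_neg (show ¬(k+1 = k) by omega)]
        simp
      rw [hval]
    · intro b hb hbk
      have h1 : (b:ℕ) ≠ k + 1 := by
        have h := (Finset.mem_erase.mp hb).1
        simpa [Fin.ext_iff] using h
      have h2 : (b:ℕ) ≠ k := by simpa [Fin.ext_iff] using hbk
      have h3 : (b:ℕ) < k + 2 := b.isLt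
      unfold tridiag
      simp only [Matrix.of_apply, Fin.val_last]
      rw [if_neg (show ¬(k+1 = (b:ℕ)) by omega), if_neg (show ¬(k+1 = (b:ℕ)+1) by omega),
        if_neg (show ¬((b:ℕ) = k+1+1) by omega), abs_zero]

set_option maxHeartbeats 1000000 in
/-- If `A` is invertible, `μ_∞[A] ≤ 0` and `α_m + |β_m| < 0`, then
`|A^{−1} e_m|_∞ ≤ 1/(−α_m − |β_m|)`, where `e_m` is the last standard unit vector.
(The matrix has size `m+1` here; the convention `β_1 = 0` in the one-dimensional
case is reflected by the hypothesis `hconv`.) -/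
theorem statement4 (m : ℕ) (α β γ : Fin (m + 1) → ℝ) (hconv : m = 0 → β 0 = 0)
    (A : Matrix (Fin (m + 1)) (Fin (m + 1)) ℝ) (hA : A = tridiag α β γ)
    (hinv : IsUnit A.det) (hmu : logMaxNorm A ≤ 0)
    (hlast : α (Fin.last m) + |β (Fin.last m)| < 0) :
    vecMaxNorm (A⁻¹.mulVec (Pi.single (Fin.last m) 1)) ≤
      1 / (-α (Fin.last m) - |β (Fin.last m)|) := by
  have hβ0 : (0:ℝ) ≤ |β (Fin.last m)| := abs_nonneg _
  set δ : ℝ := -α (Fin.last m) - |β (Fin.last m)| with hδdef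
  have hδ : 0 < δ := by rw [hδdef]; linarith
  have hαL : α (Fin.last m) < 0 := by linarith
  have hc : 0 < 1/δ := by positivity
  have hdiag : ∀ i, A i i = α i := by intro i; rw [hA]; simp [tridiag]
  simp only [logMaxNorm] at hmu
  have hrow : ∀ i, ∑ j ∈ Finset.univ.erase i, |A i j| ≤ -α i := by
    intro i
    have h1 : A i i + ∑ j ∈ Finset.univ.erase i, |A i j| ≤ 0 :=
      le_trans (le_ciSup (f := fun i => A i i + ∑ j ∈ Finset.univ.erase i, |A i j|) (Set.Finite.bddAbove (Set.finite_range _)) i) hmu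
    rw [hdiag i] at h1; linarith
  have hrow0 : ∀ i, (0:ℝ) ≤ ∑ j ∈ Finset.univ.erase i, |A i j| :=
    fun i => Finset.sum_nonneg fun j _ => abs_nonneg _
  have hαnp : ∀ i, α i ≤ 0 := fun i => by linarith [hrow i, hrow0 i]
  have hrowL : ∑ j ∈ Finset.univ.erase (Fin.last m), |A (Fin.last m) j|
      ≤ |β (Fin.last m)| := by
    rw [hA]; exact lastRowSum α β γ
  set d : Fin (m+1) → ℝ := fun i => if i = Fin.last m then 0 else 1 with hd
  -- key existence of perturbed solutions
  have key : ∀ ε : ℝ, 0 < ε → ∃ w : Fin (m+1) → ℝ,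
      A.mulVec w = (Pi.single (Fin.last m) 1 : Fin (m+1) → ℝ) + ε • ((Matrix.diagonal d).mulVec w) ∧
      ∀ j, |w j| ≤ 1/δ := by
    intro ε hε
    set B : Matrix (Fin (m+1)) (Fin (m+1)) ℝ := A - ε • Matrix.diagonal d with hB
    have hBoff : ∀ i j, i ≠ j → B i j = A i j := by
      intro i j h
      simp [hB, Matrix.diagonal_apply_ne _ h]
    have hBsum : ∀ (i : Fin (m+1)) (M : ℝ), ∑ j ∈ Finset.univ.erase i, |B i j| * M
        = (∑ j ∈ Finset.univ.erase i, |A i j|) * M := by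
      intro i M
      rw [Finset.sum_mul]
      refine Finset.sum_congr rfl fun j hj => ?_
      rw [hBoff i j (Finset.ne_of_mem_erase hj).symm]
    have hBdiagL : B (Fin.last m) (Fin.last m) = α (Fin.last m) := by
      simp [hB, hd, hdiag, Matrix.diagonal_apply_eq]
    have hBdiagO : ∀ i, i ≠ Fin.last m → B i i = α i - ε := by
      intro i hi
      simp [hB, hd, hdiag, Matrix.diagonal_apply_eq, hi]
    have hEst : ∀ (x y : Fin (m+1) → ℝ), B.mulVec x = y → ∀ (i₀ : Fin (m+1)) (M : ℝ),
        (∀ j, |x j| ≤ M) → |x i₀| = M →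
        (i₀ = Fin.last m → δ * M ≤ |y i₀|) ∧ (i₀ ≠ Fin.last m → ε * M ≤ |y i₀|) := by
      intro x y hxy i₀ M hM hMi
      have hM0 : 0 ≤ M := hMi ▸ abs_nonneg _
      have hb := rowBound B x y hxy i₀ M hM
      constructor
      · intro hi; subst hi
        rw [hBdiagL, abs_mul, hMi, abs_of_neg hαL] at hb
        have h3 : ∑ j ∈ Finset.univ.erase (Fin.last m), |B (Fin.last m) j| * M
            ≤ |β (Fin.last m)| * M := by
          rw [hBsum]
          exact mul_le_mul_of_nonneg_right hrowL hM0
        have hδM : δ * M = (-α (Fin.last m)) * M - |β (Fin.last m)| * M := by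
          rw [hδdef]; ring
        linarith
      · intro hi
        rw [hBdiagO i₀ hi, abs_mul, hMi] at hb
        have hαε : α i₀ - ε < 0 := by linarith [hαnp i₀]
        rw [abs_of_neg hαε] at hb
        have h3 : ∑ j ∈ Finset.univ.erase i₀, |B i₀ j| * M ≤ (-α i₀) * M := by
          rw [hBsum]
          exact mul_le_mul_of_nonneg_right (hrow i₀) hM0
        have hr : -(α i₀ - ε) * M = ε * M + (-α i₀) * M := by ring
        linarith
    have hker : ∀ x : Fin (m+1) → ℝ, B.mulVec x = 0 → x = 0 := by
      intro x hx
      obtain ⟨i₀, hi₀⟩ := Finite.exists_max fun j => |x j|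
      have hest := hEst x 0 hx i₀ |x i₀| hi₀ rfl
      have hM0 : |x i₀| ≤ 0 := by
        by_cases hi : i₀ = Fin.last m
        · have h := hest.1 hi
          rw [Pi.zero_apply, abs_zero] at h
          nlinarith [abs_nonneg (x i₀)]
        · have h := hest.2 hi
          rw [Pi.zero_apply, abs_zero] at h
          nlinarith [abs_nonneg (x i₀)]
      funext j
      have hj := (hi₀ j).trans hM0
      simpa using abs_nonpos_iff.mp hj
    have hinj : Function.Injective B.mulVecLin := by
      intro x₁ x₂ h
      have h0 : B.mulVec (x₁ - x₂) = 0 := by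
        rw [Matrix.mulVec_sub, sub_eq_zero]
        simpa [Matrix.mulVecLin_apply] using h
      have := hker _ h0
      exact sub_eq_zero.mp this
    obtain ⟨w, hw⟩ := (LinearMap.injective_iff_surjective).mp hinj ((Pi.single (Fin.last m) 1 : Fin (m+1) → ℝ))
    rw [Matrix.mulVecLin_apply] at hw
    obtain ⟨i₀, hi₀⟩ := Finite.exists_max fun j => |w j|
    have hest := hEst w _ hw i₀ |w i₀| hi₀ rfl
    have hwB : ∀ j, |w j| ≤ 1/δ := by
      intro j
      refine le_trans (hi₀ j) ?_
      by_cases hi : i₀ = Fin.last m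
      · have h1 := hest.1 hi
        have h2 : |(Pi.single (Fin.last m) 1 : Fin (m+1) → ℝ) i₀| = 1 := by rw [hi]; simp
        rw [h2] at h1
        rw [le_div_iff₀ hδ]
        nlinarith
      · have h1 := hest.2 hi
        have h2 : |(Pi.single (Fin.last m) 1 : Fin (m+1) → ℝ) i₀| = 0 := by
          rw [Pi.single_eq_of_ne hi]; simp
        rw [h2] at h1
        have h3 : |w i₀| ≤ 0 := by nlinarith [abs_nonneg (w i₀)]
        linarith
    refine ⟨w, ?_, hwB⟩
    have h2 : A.mulVec w - ε • ((Matrix.diagonal d).mulVec w) = (Pi.single (Fin.last m) 1 : Fin (m+1) → ℝ) := by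
      rw [← Matrix.smul_mulVec, ← Matrix.sub_mulVec]
      exact hw
    rw [sub_eq_iff_eq_add] at h2
    exact h2
  have hAv : A.mulVec (A⁻¹.mulVec ((Pi.single (Fin.last m) 1 : Fin (m+1) → ℝ))) = (Pi.single (Fin.last m) 1 : Fin (m+1) → ℝ) := by
    rw [Matrix.mulVec_mulVec, Matrix.mul_nonsing_inv _ hinv, Matrix.one_mulVec]
  set v := A⁻¹.mulVec ((Pi.single (Fin.last m) 1 : Fin (m+1) → ℝ)) with hv
  set K := ∑ i, ∑ j, |A⁻¹ i j| with hKdef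
  have hK0 : 0 ≤ K := Finset.sum_nonneg fun i _ => Finset.sum_nonneg fun j _ => abs_nonneg _
  have hbound : ∀ (i : Fin (m+1)) (ε : ℝ), 0 < ε → |v i| ≤ 1/δ + ε * (K * (1/δ)) := by
    intro i ε hε
    obtain ⟨w, hwEq, hwB⟩ := key ε hε
    have hvw : v - w = A⁻¹.mulVec (-(ε • ((Matrix.diagonal d).mulVec w))) := by
      have h1 : A.mulVec (v - w) = -(ε • ((Matrix.diagonal d).mulVec w)) := by
        rw [Matrix.mulVec_sub, hAv, hwEq]
        abel
      rw [← h1, Matrix.mulVec_mulVec, Matrix.nonsing_inv_mul _ hinv, Matrix.one_mulVec]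
    have hub : ∀ j, |(-(ε • ((Matrix.diagonal d).mulVec w))) j| ≤ ε * (1/δ) := by
      intro j
      have h1 : ((Matrix.diagonal d).mulVec w) j = d j * w j := by
        rw [Matrix.mulVec_diagonal]
      rw [Pi.neg_apply, abs_neg, Pi.smul_apply, smul_eq_mul, abs_mul, abs_of_pos hε, h1]
      have hdj : |d j * w j| ≤ 1/δ := by
        rw [abs_mul]
        have hd1 : |d j| ≤ 1 := by
          rw [hd]; dsimp only; split_ifs <;> simp
        nlinarith [abs_nonneg (w j), hwB j, abs_nonneg (d j), hc]
      exact mul_le_mul_of_nonneg_left hdj (le_of_lt hε)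
    have hrowK : ∑ j, |A⁻¹ i j| ≤ K := by
      rw [hKdef]
      exact Finset.single_le_sum (f := fun i => ∑ j, |A⁻¹ i j|)
        (fun i _ => Finset.sum_nonneg fun j _ => abs_nonneg _) (Finset.mem_univ i)
    have h2 := mulVecAbsLe A⁻¹ _ (ε * (1/δ)) hub i
    have h3 : v i = w i + (A⁻¹.mulVec (-(ε • ((Matrix.diagonal d).mulVec w)))) i := by
      have h := congrFun hvw i
      rw [Pi.sub_apply] at h
      linarith
    rw [h3]
    refine (abs_add_le _ _).trans ?_
    have h4 : |(A⁻¹.mulVec (-(ε • ((Matrix.diagonal d).mulVec w)))) i| ≤ K * (ε * (1/δ)) := by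
      refine h2.trans ?_
      exact mul_le_mul_of_nonneg_right hrowK (by positivity)
    have h5 := hwB i
    have hr : K * (ε * (1/δ)) = ε * (K * (1/δ)) := by ring
    linarith
  have hfin : ∀ i, |v i| ≤ 1/δ := by
    intro i
    by_contra hcon
    push_neg at hcon
    set C := K * (1/δ) with hC
    have hC0 : 0 ≤ C := by positivity
    set η := |v i| - 1/δ with hη
    have hη0 : 0 < η := by rw [hη]; linarith
    have hε0 : 0 < η / (C + 1) := by positivity
    have hb := hbound i (η / (C+1)) hε0
    have hlt : η / (C+1) * C < η := by
      rw [div_mul_eq_mul_div, div_lt_iff₀ (by linarith)]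
      nlinarith
    linarith
  simp only [vecMaxNorm]
  exact ciSup_le hfin
end

section
/- For the first-order forward finite difference discretization, defined for 1 ≤ j ≤ m by β_j = σ² s_j²/(h_j H_j), α_j = −r − r s_j/h_{j+1} − σ² s_j²/(h_j h_{j+1}), γ_j = r s_j/h_{j+1} + σ² s_j²/(h_{j+1} H_j), the matrix A satisfies condition (2.2) for every r > 0, every σ ≥ 0 and every grid: rI + A is invertible, μ_∞[rI + A] ≤ 0, and r + α_m + |β_m| + |γ_m| ≤ 0. -/
lemma sum_ite_diag {m : ℕ} (i : Fin m) (f : Fin m → ℝ) :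
    ∑ j : Fin m, (if (i : ℕ) = (j : ℕ) then f j else 0) = f i := by
  have : ∀ j : Fin m, (if (i : ℕ) = (j : ℕ) then f j else 0) = (if j = i then f j else 0) := by
    intro j
    by_cases hc : (i : ℕ) = (j : ℕ)
    · rw [if_pos hc, if_pos (Fin.ext hc.symm)]
    · rw [if_neg hc, if_neg (fun h => hc (by rw [h]))]
  rw [Finset.sum_congr rfl (fun j _ => this j), Finset.sum_ite_eq']
  simp

lemma sum_ite_pred {m : ℕ} (i : Fin m) (f : Fin m → ℝ) :
    ∑ j : Fin m, (if (i : ℕ) = (j : ℕ) + 1 then f j else 0) =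
      if h : 0 < (i : ℕ) then f ⟨(i : ℕ) - 1, Nat.lt_of_le_of_lt (Nat.sub_le _ _) i.isLt⟩ else 0 := by
  by_cases h : 0 < (i : ℕ)
  · rw [dif_pos h]
    set p : Fin m := ⟨(i : ℕ) - 1, Nat.lt_of_le_of_lt (Nat.sub_le _ _) i.isLt⟩ with hp
    have hpv : (p : ℕ) = (i : ℕ) - 1 := rfl
    have : ∀ j : Fin m, (if (i : ℕ) = (j : ℕ) + 1 then f j else 0) = (if j = p then f j else 0) := by
      intro j
      by_cases hc : (i : ℕ) = (j : ℕ) + 1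
      · rw [if_pos hc, if_pos (Fin.ext (by omega))]
      · rw [if_neg hc, if_neg (fun hj => hc (by subst hj; omega))]
    rw [Finset.sum_congr rfl (fun j _ => this j), Finset.sum_ite_eq']
    simp
  · rw [dif_neg h]
    exact Finset.sum_eq_zero (fun j _ => if_neg (by omega))

lemma sum_ite_succ {m : ℕ} (i : Fin m) (f : Fin m → ℝ) :
    ∑ j : Fin m, (if (j : ℕ) = (i : ℕ) + 1 then f j else 0) =
      if h : (i : ℕ) + 1 < m then f ⟨(i : ℕ) + 1, h⟩ else 0 := by
  by_cases h : (i : ℕ) + 1 < m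
  · rw [dif_pos h]
    set p : Fin m := ⟨(i : ℕ) + 1, h⟩ with hp
    have hpv : (p : ℕ) = (i : ℕ) + 1 := rfl
    have : ∀ j : Fin m, (if (j : ℕ) = (i : ℕ) + 1 then f j else 0) = (if j = p then f j else 0) := by
      intro j
      by_cases hc : (j : ℕ) = (i : ℕ) + 1
      · rw [if_pos hc, if_pos (Fin.ext (by omega))]
      · rw [if_neg hc, if_neg (fun hj => hc (by subst hj; omega))]
    rw [Finset.sum_congr rfl (fun j _ => this j), Finset.sum_ite_eq']
    simp
  · rw [dif_neg h]
    exact Finset.sum_eq_zero (fun j _ => if_neg (by have := j.isLt; omega))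

lemma tridiag_mulVec {m : ℕ} (α β γ : Fin m → ℝ) (v : Fin m → ℝ) (i : Fin m) :
    (tridiag α β γ).mulVec v i =
      (if h : 0 < (i : ℕ) then β i * v ⟨(i : ℕ) - 1, Nat.lt_of_le_of_lt (Nat.sub_le _ _) i.isLt⟩ else 0)
      + α i * v i
      + (if h : (i : ℕ) + 1 < m then γ i * v ⟨(i : ℕ) + 1, h⟩ else 0) := by
  have expand : ∀ j : Fin m, tridiag α β γ i j * v j =
      (if (i : ℕ) = (j : ℕ) then α i * v j else 0)
    + (if (i : ℕ) = (j : ℕ) + 1 then β i * v j else 0)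
    + (if (j : ℕ) = (i : ℕ) + 1 then γ i * v j else 0) := by
    intro j
    simp only [tridiag, Matrix.of_apply]
    split_ifs <;> first | (exfalso; omega) | ring
  rw [show (tridiag α β γ).mulVec v i = ∑ j : Fin m, tridiag α β γ i j * v j from rfl]
  rw [Finset.sum_congr rfl (fun j _ => expand j)]
  rw [Finset.sum_add_distrib, Finset.sum_add_distrib,
    sum_ite_diag i (fun j => α i * v j),
    sum_ite_pred i (fun j => β i * v j),
    sum_ite_succ i (fun j => γ i * v j)]
  ring

/-- For the first-order forward finite difference discretization (on a grid
`0 = s_0 < s_1 < … < s_{m+1}` with mesh widths `h_j = s_j − s_{j−1}` and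
`H_j = h_j + h_{j+1}`, matrix size `m = k+2 ≥ 2`, row `i : Fin (k+2)`
corresponding to the grid point `s_{i+1}`), defined by
`β_j = σ² s_j²/(h_j H_j)`, `α_j = −r − r s_j/h_{j+1} − σ² s_j²/(h_j h_{j+1})`,
`γ_j = r s_j/h_{j+1} + σ² s_j²/(h_{j+1} H_j)`, the matrix `A` satisfies condition
(2.2) for every `r > 0`, every `σ ≥ 0` and every grid: `rI + A` is invertible,
`μ_∞[rI + A] ≤ 0` and `r + α_m + |β_m| + |γ_m| ≤ 0`. -/
theorem statement10 (k : ℕ) (r σ : ℝ) (hr : 0 < r) (hσ : 0 ≤ σ)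
    (s : ℕ → ℝ) (hs0 : s 0 = 0) (hmono : ∀ j : ℕ, j ≤ k + 2 → s j < s (j + 1))
    (α β γ : Fin (k + 2) → ℝ)
    (hβ : ∀ i : Fin (k + 2),
      β i = σ ^ 2 * (s ((i : ℕ) + 1)) ^ 2 / ((s ((i : ℕ) + 1) - s (i : ℕ)) * (s ((i : ℕ) + 2) - s (i : ℕ))))
    (hα : ∀ i : Fin (k + 2),
      α i = -r - r * s ((i : ℕ) + 1) / (s ((i : ℕ) + 2) - s ((i : ℕ) + 1))
        - σ ^ 2 * (s ((i : ℕ) + 1)) ^ 2 / ((s ((i : ℕ) + 1) - s (i : ℕ)) * (s ((i : ℕ) + 2) - s ((i : ℕ) + 1))))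
    (hγ : ∀ i : Fin (k + 2),
      γ i = r * s ((i : ℕ) + 1) / (s ((i : ℕ) + 2) - s ((i : ℕ) + 1))
        + σ ^ 2 * (s ((i : ℕ) + 1)) ^ 2 / ((s ((i : ℕ) + 2) - s ((i : ℕ) + 1)) * (s ((i : ℕ) + 2) - s (i : ℕ))))
    (A : Matrix (Fin (k + 2)) (Fin (k + 2)) ℝ) (hA : A = tridiag α β γ) :
    IsUnit (r • (1 : Matrix (Fin (k + 2)) (Fin (k + 2)) ℝ) + A).det ∧
    logMaxNorm (r • (1 : Matrix (Fin (k + 2)) (Fin (k + 2)) ℝ) + A) ≤ 0 ∧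
    r + α (Fin.last (k + 1)) + |β (Fin.last (k + 1))| + |γ (Fin.last (k + 1))| ≤ 0 := by
  subst hA
  have hmono' : ∀ j, j ≤ k + 2 → 0 < s (j + 1) - s j := fun j hj => sub_pos.2 (hmono j hj)
  have hpos : ∀ n, n ≤ k + 2 → 0 < s (n + 1) := by
    intro n hn
    induction n with
    | zero => rw [← hs0]; exact hmono 0 (by omega)
    | succ p ih => exact lt_trans (ih (by omega)) (hmono (p + 1) hn)
  have key : ∀ i : Fin (k + 2), 0 ≤ β i ∧ 0 < γ i ∧ r + α i + β i + γ i = 0 := by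
    intro i
    have hn := i.isLt
    have ha : 0 < s ((i : ℕ) + 1) - s (i : ℕ) := hmono' (i : ℕ) (by omega)
    have hb : 0 < s ((i : ℕ) + 2) - s ((i : ℕ) + 1) := hmono' ((i : ℕ) + 1) (by omega)
    have hab : 0 < s ((i : ℕ) + 2) - s (i : ℕ) := by linarith
    have hsp : 0 < s ((i : ℕ) + 1) := hpos (i : ℕ) (by omega)
    refine ⟨?_, ?_, ?_⟩
    · rw [hβ i]; exact div_nonneg (by positivity) (le_of_lt (mul_pos ha hab))
    · rw [hγ i]
      have h1 : 0 < r * s ((i : ℕ) + 1) / (s ((i : ℕ) + 2) - s ((i : ℕ) + 1)) :=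
        div_pos (mul_pos hr hsp) hb
      have h2 : 0 ≤ σ ^ 2 * (s ((i : ℕ) + 1)) ^ 2 /
          ((s ((i : ℕ) + 2) - s ((i : ℕ) + 1)) * (s ((i : ℕ) + 2) - s (i : ℕ))) :=
        div_nonneg (by positivity) (le_of_lt (mul_pos hb hab))
      linarith
    · rw [hα i, hβ i, hγ i]
      have ha' := ha.ne'
      have hb' := hb.ne'
      have hab' := hab.ne'
      field_simp
      ring
  refine ⟨?_, ?_, ?_⟩
  · -- invertibility
    rw [isUnit_iff_ne_zero]
    intro hdet
    obtain ⟨v, hv0, hMv⟩ := Matrix.exists_mulVec_eq_zero_iff.2 hdet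
    set X : ℕ → ℝ := fun n => if h : n < k + 2 then v ⟨n, h⟩ else 0 with hXdef
    set B : ℕ → ℝ := fun n => if h : n < k + 2 then β ⟨n, h⟩ else 0 with hBdef
    set Aa : ℕ → ℝ := fun n => if h : n < k + 2 then α ⟨n, h⟩ else 0 with hAdef
    set G : ℕ → ℝ := fun n => if h : n < k + 2 then γ ⟨n, h⟩ else 0 with hGdef
    have keyN : ∀ n, n < k + 2 → 0 ≤ B n ∧ 0 < G n ∧ r + Aa n + B n + G n = 0 := by
      intro n hn
      have h := key ⟨n, hn⟩
      simp only [hBdef, hAdef, hGdef]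
      rw [dif_pos hn, dif_pos hn, dif_pos hn]
      exact h
    have hXz : ∀ n, k + 2 ≤ n → X n = 0 := by
      intro n hn; simp only [hXdef]; rw [dif_neg (by omega)]
    have rowX : ∀ n, n < k + 2 →
        r * X n + ((if n = 0 then 0 else B n * X (n - 1)) + Aa n * X n + G n * X (n + 1)) = 0 := by
      intro n hn
      have h0 := congrFun hMv ⟨n, hn⟩
      rw [Matrix.add_mulVec, Matrix.smul_mulVec, Matrix.one_mulVec] at h0
      have h1 : r * v ⟨n, hn⟩ + (tridiag α β γ).mulVec v ⟨n, hn⟩ = 0 := by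
        simpa [Pi.add_apply, Pi.smul_apply, smul_eq_mul] using h0
      rw [tridiag_mulVec] at h1
      simp only [Fin.val_mk] at h1
      have hn1 : n - 1 < k + 2 := by omega
      simp only [hXdef, hBdef, hAdef, hGdef]
      simp only [dif_pos hn, dif_pos hn1]
      by_cases h3 : n = 0
      · subst h3
        rw [if_pos rfl]
        rw [dif_neg (lt_irrefl 0)] at h1
        by_cases h2 : 0 + 1 < k + 2
        · rw [dif_pos h2] at h1
          rw [dif_pos h2]
          linarith [h1]
        · rw [dif_neg h2] at h1
          rw [dif_neg h2, mul_zero]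
          linarith [h1]
      · rw [if_neg h3]
        rw [dif_pos (show 0 < n by omega)] at h1
        by_cases h2 : n + 1 < k + 2
        · rw [dif_pos h2] at h1
          rw [dif_pos h2]
          linarith [h1]
        · rw [dif_neg h2] at h1
          rw [dif_neg h2, mul_zero]
          linarith [h1]
    have main : ∀ Y : ℕ → ℝ, (∀ n, k + 2 ≤ n → Y n = 0) →
        (∀ n, n < k + 2 →
          r * Y n + ((if n = 0 then 0 else B n * Y (n - 1)) + Aa n * Y n + G n * Y (n + 1)) = 0) →
        0 < Y 0 → False := by
      intro Y hYz hYrow hY0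
      have mono : ∀ n, n ≤ k → Y n ≤ Y (n + 1) := by
        intro n
        induction n with
        | zero =>
          intro _
          have h := hYrow 0 (by omega)
          rw [if_pos rfl] at h
          obtain ⟨hb, hg, hk⟩ := keyN 0 (by omega)
          have hAa : Aa 0 = -r - B 0 - G 0 := by linarith
          rw [hAa] at h
          have hle : G 0 * Y 0 ≤ G 0 * Y (0 + 1) := by nlinarith [mul_nonneg hb hY0.le]
          exact le_of_mul_le_mul_left hle hg
        | succ p ih =>
          intro hp
          have hprev : Y p ≤ Y (p + 1) := ih (by omega)
          have h := hYrow (p + 1) (by omega)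
          rw [if_neg (by omega)] at h
          simp only [Nat.add_sub_cancel] at h
          obtain ⟨hb, hg, hk⟩ := keyN (p + 1) (by omega)
          have hAa : Aa (p + 1) = -r - B (p + 1) - G (p + 1) := by linarith
          rw [hAa] at h
          have hle : G (p + 1) * Y (p + 1) ≤ G (p + 1) * Y (p + 1 + 1) := by
            nlinarith [mul_nonneg hb (sub_nonneg.2 hprev)]
          exact le_of_mul_le_mul_left hle hg
      have chain : ∀ n, n ≤ k + 1 → Y 0 ≤ Y n := by
        intro n
        induction n with
        | zero => intro _; exact le_rfl
        | succ p ih => intro hp; exact le_trans (ih (by omega)) (mono p (by omega))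
      have h := hYrow (k + 1) (by omega)
      rw [if_neg (by omega)] at h
      simp only [Nat.add_sub_cancel] at h
      obtain ⟨hb, hg, hk⟩ := keyN (k + 1) (by omega)
      have hAa : Aa (k + 1) = -r - B (k + 1) - G (k + 1) := by linarith
      rw [hAa] at h
      have hz : Y (k + 1 + 1) = 0 := hYz (k + 1 + 1) (by omega)
      rw [hz, mul_zero] at h
      have hyk : Y k ≤ Y (k + 1) := mono k le_rfl
      have hy1 : 0 < Y (k + 1) := lt_of_lt_of_le hY0 (chain (k + 1) le_rfl)
      nlinarith [mul_nonneg hb (sub_nonneg.2 hyk), mul_pos hg hy1]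
    have hX0 : X 0 = 0 := by
      rcases lt_trichotomy (X 0) 0 with hlt | heq | hgt
      · exfalso
        have rowsNeg : ∀ n, n < k + 2 →
            r * (-X n) + ((if n = 0 then 0 else B n * (-X (n - 1))) + Aa n * (-X n)
              + G n * (-X (n + 1))) = 0 := by
          intro n hn
          have h := rowX n hn
          split_ifs at h ⊢ <;> linarith
        exact main (fun n => -X n) (fun n hn => by show -X n = 0; rw [hXz n hn]; ring)
          rowsNeg (by show (0:ℝ) < -X 0; linarith)
      · exact heq
      · exact (main X hXz rowX hgt).elim
    have z2 : ∀ n, n ≤ k → X n = 0 ∧ X (n + 1) = 0 := by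
      intro n
      induction n with
      | zero =>
        intro _
        refine ⟨hX0, ?_⟩
        have h := rowX 0 (by omega)
        rw [if_pos rfl, hX0] at h
        obtain ⟨hb, hg, hk⟩ := keyN 0 (by omega)
        have hG : G 0 * X (0 + 1) = 0 := by linarith
        exact (mul_eq_zero.1 hG).resolve_left hg.ne'
      | succ p ih =>
        intro hp
        obtain ⟨h0, h1⟩ := ih (by omega)
        refine ⟨h1, ?_⟩
        have h := rowX (p + 1) (by omega)
        rw [if_neg (by omega)] at h
        simp only [Nat.add_sub_cancel] at h
        rw [h0, h1] at h
        obtain ⟨hb, hg, hk⟩ := keyN (p + 1) (by omega)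
        have hG : G (p + 1) * X (p + 1 + 1) = 0 := by linarith
        exact (mul_eq_zero.1 hG).resolve_left hg.ne'
    apply hv0
    funext j
    have hj := j.isLt
    have hXj : X (j : ℕ) = 0 := by
      by_cases hjk : (j : ℕ) ≤ k
      · exact (z2 _ hjk).1
      · have hje : (j : ℕ) = k + 1 := by omega
        rw [hje]
        exact (z2 k le_rfl).2
    have hvj : v j = X (j : ℕ) := by
      simp only [hXdef]
      rw [dif_pos hj]
    rw [hvj, hXj]
    simp
  · -- logarithmic norm
    unfold logMaxNorm
    apply ciSup_le
    intro i
    obtain ⟨hb, hg, hsum⟩ := key i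
    have hdiag : (r • (1 : Matrix (Fin (k + 2)) (Fin (k + 2)) ℝ) + tridiag α β γ) i i
        = r + α i := by
      simp [Matrix.add_apply, Matrix.smul_apply, Matrix.one_apply_eq, tridiag, smul_eq_mul]
    have hterm : ∀ j ∈ Finset.univ.erase i,
        |(r • (1 : Matrix (Fin (k + 2)) (Fin (k + 2)) ℝ) + tridiag α β γ) i j|
          = (if (i : ℕ) = (j : ℕ) + 1 then |β i| else 0)
            + (if (j : ℕ) = (i : ℕ) + 1 then |γ i| else 0) := by
      intro j hj
      have hji : j ≠ i := Finset.ne_of_mem_erase hj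
      have hne : (i : ℕ) ≠ (j : ℕ) := fun h => hji (Fin.ext h.symm)
      have hone : (1 : Matrix (Fin (k + 2)) (Fin (k + 2)) ℝ) i j = 0 :=
        Matrix.one_apply_ne (Ne.symm hji)
      simp only [Matrix.add_apply, Matrix.smul_apply, hone, smul_eq_mul, mul_zero, zero_add,
        tridiag, Matrix.of_apply, if_neg hne]
      split_ifs <;> first | (exfalso; omega) | simp
    have habs : ∑ j ∈ Finset.univ.erase i,
        |(r • (1 : Matrix (Fin (k + 2)) (Fin (k + 2)) ℝ) + tridiag α β γ) i j| ≤ β i + γ i := by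
      rw [Finset.sum_congr rfl hterm]
      rw [Finset.sum_erase _ (by rw [if_neg (by omega), if_neg (by omega)]; ring)]
      rw [Finset.sum_add_distrib, sum_ite_pred i (fun _ => |β i|), sum_ite_succ i (fun _ => |γ i|)]
      have e1 : (if h : 0 < (i : ℕ) then |β i| else 0) ≤ β i := by
        split_ifs
        · rw [abs_of_nonneg hb]
        · exact hb
      have e2 : (if h : (i : ℕ) + 1 < k + 2 then |γ i| else 0) ≤ γ i := by
        split_ifs
        · rw [abs_of_pos hg]
        · exact hg.le
      linarith
    rw [hdiag]
    linarith
  · -- last row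
    obtain ⟨hb, hg, hsum⟩ := key (Fin.last (k + 1))
    rw [abs_of_nonneg hb, abs_of_pos hg]
    linarith
end

section
/- For the central finite difference discretization A, defined for 1 ≤ j ≤ m by β_j = −r s_j/H_j + σ² s_j²/(h_j H_j), α_j = −r − σ² s_j²/(h_j h_{j+1}), γ_j = r s_j/H_j + σ² s_j²/(h_{j+1} H_j), if 0 < r ≤ σ² s_j/h_j for all 1 ≤ j ≤ m, then condition (2.2) holds: rI + A is invertible, μ_∞[rI + A] ≤ 0, and r + α_m + |β_m| + |γ_m| ≤ 0. -/
lemma sum_ite_le_aux {m : ℕ} (P : Fin m → Prop) [DecidablePred P]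
    (hP : ∀ a b, P a → P b → a = b) {c : ℝ} (hc : 0 ≤ c) :
    ∑ j : Fin m, (if P j then c else 0) ≤ c := by
  by_cases h : ∃ j, P j
  · obtain ⟨j0, hj0⟩ := h
    have : ∑ j : Fin m, (if P j then c else 0) = if P j0 then c else 0 := by
      apply Finset.sum_eq_single_of_mem j0 (Finset.mem_univ _)
      intro b _ hb
      have : ¬ P b := fun hPb => hb (hP b j0 hPb hj0)
      simp [this]
    rw [this]; simp [hj0]
  · push_neg at h
    have : ∑ j : Fin m, (if P j then c else 0) = 0 := by
      apply Finset.sum_eq_zero; intro j _; simp [h j]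
    rw [this]; exact hc

lemma sum_off_le {m : ℕ} (i : Fin m) (b c : ℝ) (hb : 0 ≤ b) (hc : 0 ≤ c) (f : Fin m → ℝ)
    (hf : ∀ j, j ≠ i →
      f j = if (i : ℕ) = (j : ℕ) + 1 then b else if (j : ℕ) = (i : ℕ) + 1 then c else 0) :
    ∑ j ∈ Finset.univ.erase i, f j ≤ b + c := by
  have h1 : ∑ j ∈ Finset.univ.erase i, f j =
      ∑ j ∈ Finset.univ.erase i,
        ((if (i : ℕ) = (j : ℕ) + 1 then b else 0) +
         (if (j : ℕ) = (i : ℕ) + 1 then c else 0)) := by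
    refine Finset.sum_congr rfl fun j hj => ?_
    have hji : j ≠ i := Finset.ne_of_mem_erase hj
    rw [hf j hji]
    by_cases hP : (i : ℕ) = (j : ℕ) + 1
    · have hQ : ¬ (j : ℕ) = (i : ℕ) + 1 := by omega
      simp only [if_pos hP, if_neg hQ, add_zero]
    · by_cases hQ : (j : ℕ) = (i : ℕ) + 1
      · simp only [if_neg hP, if_pos hQ, zero_add]
      · simp only [if_neg hP, if_neg hQ, add_zero]
  rw [h1]
  have h2 : ∑ j ∈ Finset.univ.erase i,
      ((if (i : ℕ) = (j : ℕ) + 1 then b else 0) +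
       (if (j : ℕ) = (i : ℕ) + 1 then c else 0)) ≤
      ∑ j : Fin m,
      ((if (i : ℕ) = (j : ℕ) + 1 then b else 0) +
       (if (j : ℕ) = (i : ℕ) + 1 then c else 0)) := by
    apply Finset.sum_le_sum_of_subset_of_nonneg (Finset.subset_univ _)
    intro j _ _
    apply add_nonneg
    · split_ifs with h
      · exact hb
      · exact le_rfl
    · split_ifs with h
      · exact hc
      · exact le_rfl
  refine h2.trans ?_
  rw [Finset.sum_add_distrib]
  apply add_le_add
  · exact sum_ite_le_aux _ (fun a b ha hb => Fin.val_injective (by omega)) hb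
  · exact sum_ite_le_aux _ (fun a b ha hb => Fin.val_injective (by omega)) hc

/-- For the central finite difference discretization (on a grid
`0 = s_0 < s_1 < … < s_{m+1}` with mesh widths `h_j = s_j − s_{j−1}` and
`H_j = h_j + h_{j+1}`, matrix size `m = k+2 ≥ 2`, row `i : Fin (k+2)`
corresponding to the grid point `s_{i+1}`), defined by
`β_j = −r s_j/H_j + σ² s_j²/(h_j H_j)`, `α_j = −r − σ² s_j²/(h_j h_{j+1})`,
`γ_j = r s_j/H_j + σ² s_j²/(h_{j+1} H_j)`; if `0 < r ≤ σ² s_j/h_j` for all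
`1 ≤ j ≤ m`, then condition (2.2) holds: `rI + A` is invertible,
`μ_∞[rI + A] ≤ 0` and `r + α_m + |β_m| + |γ_m| ≤ 0`. -/
theorem statement11 (k : ℕ) (r σ : ℝ) (hr : 0 < r) (hσ : 0 ≤ σ)
    (s : ℕ → ℝ) (hs0 : s 0 = 0) (hmono : ∀ j : ℕ, j ≤ k + 2 → s j < s (j + 1))
    (α β γ : Fin (k + 2) → ℝ)
    (hβ : ∀ i : Fin (k + 2),
      β i = -(r * s ((i : ℕ) + 1)) / (s ((i : ℕ) + 2) - s (i : ℕ))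
        + σ ^ 2 * (s ((i : ℕ) + 1)) ^ 2
          / ((s ((i : ℕ) + 1) - s (i : ℕ)) * (s ((i : ℕ) + 2) - s (i : ℕ))))
    (hα : ∀ i : Fin (k + 2),
      α i = -r - σ ^ 2 * (s ((i : ℕ) + 1)) ^ 2
        / ((s ((i : ℕ) + 1) - s (i : ℕ)) * (s ((i : ℕ) + 2) - s ((i : ℕ) + 1))))
    (hγ : ∀ i : Fin (k + 2),
      γ i = r * s ((i : ℕ) + 1) / (s ((i : ℕ) + 2) - s (i : ℕ))
        + σ ^ 2 * (s ((i : ℕ) + 1)) ^ 2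
          / ((s ((i : ℕ) + 2) - s ((i : ℕ) + 1)) * (s ((i : ℕ) + 2) - s (i : ℕ))))
    (hcond : ∀ i : Fin (k + 2),
      r ≤ σ ^ 2 * s ((i : ℕ) + 1) / (s ((i : ℕ) + 1) - s (i : ℕ)))
    (A : Matrix (Fin (k + 2)) (Fin (k + 2)) ℝ) (hA : A = tridiag α β γ) :
    IsUnit (r • (1 : Matrix (Fin (k + 2)) (Fin (k + 2)) ℝ) + A).det ∧
    logMaxNorm (r • (1 : Matrix (Fin (k + 2)) (Fin (k + 2)) ℝ) + A) ≤ 0 ∧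
    r + α (Fin.last (k + 1)) + |β (Fin.last (k + 1))| + |γ (Fin.last (k + 1))| ≤ 0 := by
  -- basic grid facts
  have hstep : ∀ j : ℕ, j ≤ k + 2 → s j < s (j + 1) := hmono
  have h1pos : ∀ i : Fin (k + 2), 0 < s ((i : ℕ) + 1) - s (i : ℕ) := by
    intro i
    have := hstep (i : ℕ) (by omega)
    linarith
  have h2pos : ∀ i : Fin (k + 2), 0 < s ((i : ℕ) + 2) - s ((i : ℕ) + 1) := by
    intro i
    have := hstep ((i : ℕ) + 1) (by have := i.isLt; omega)
    linarith
  have hHpos : ∀ i : Fin (k + 2), 0 < s ((i : ℕ) + 2) - s (i : ℕ) := by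
    intro i; have := h1pos i; have := h2pos i; linarith
  have hspos : ∀ i : Fin (k + 2), 0 < s ((i : ℕ) + 1) := by
    intro i
    have : ∀ n : ℕ, n ≤ k + 2 → s 0 ≤ s n := by
      intro n hn
      induction n with
      | zero => exact le_rfl
      | succ m ih =>
        have := hstep m (by omega)
        have := ih (by omega)
        linarith
    have h1 := this (i : ℕ) (by have := i.isLt; omega)
    have h2 := hstep (i : ℕ) (by have := i.isLt; omega)
    rw [hs0] at h1
    linarith
  -- β is nonneg, γ is positive
  have hβform : ∀ i : Fin (k + 2),
      β i = (s ((i : ℕ) + 1) * (σ ^ 2 * s ((i : ℕ) + 1) - r * (s ((i : ℕ) + 1) - s (i : ℕ))))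
        / ((s ((i : ℕ) + 1) - s (i : ℕ)) * (s ((i : ℕ) + 2) - s (i : ℕ))) := by
    intro i
    rw [hβ i]
    have h1 := (h1pos i).ne'
    have h2 := (hHpos i).ne'
    field_simp
    ring
  have hβ0 : ∀ i : Fin (k + 2), 0 ≤ β i := by
    intro i
    rw [hβform i]
    apply div_nonneg
    · apply mul_nonneg (hspos i).le
      have hc := hcond i
      rw [le_div_iff₀ (h1pos i)] at hc
      linarith
    · exact (mul_pos (h1pos i) (hHpos i)).le
  have hγpos : ∀ i : Fin (k + 2), 0 < γ i := by
    intro i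
    rw [hγ i]
    apply add_pos_of_pos_of_nonneg
    · exact div_pos (mul_pos hr (hspos i)) (hHpos i)
    · apply div_nonneg (by positivity) (mul_pos (h2pos i) (hHpos i)).le
  -- the key row identity
  have hsum0 : ∀ i : Fin (k + 2), r + α i + β i + γ i = 0 := by
    intro i
    rw [hα i, hβ i, hγ i]
    have h1 := (h1pos i).ne'
    have h2 := (h2pos i).ne'
    have h3 := (hHpos i).ne'
    field_simp
    ring
  set B := r • (1 : Matrix (Fin (k + 2)) (Fin (k + 2)) ℝ) + A with hB
  have hBdiag : ∀ i, B i i = r + α i := by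
    intro i
    simp [hB, hA, tridiag, Matrix.add_apply, Matrix.smul_apply, Matrix.one_apply]
  have hBoff : ∀ i j : Fin (k + 2), j ≠ i →
      B i j = if (i : ℕ) = (j : ℕ) + 1 then β i
        else if (j : ℕ) = (i : ℕ) + 1 then γ i else 0 := by
    intro i j hji
    have hij : i ≠ j := hji.symm
    have hvij : (i : ℕ) ≠ (j : ℕ) := fun h => hij (Fin.val_injective h)
    simp [hB, hA, tridiag, Matrix.add_apply, Matrix.smul_apply, Matrix.one_apply_ne hij, hvij]
  -- Part 3
  have part3 : r + α (Fin.last (k + 1)) + |β (Fin.last (k + 1))| + |γ (Fin.last (k + 1))| ≤ 0 := by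
    rw [abs_of_nonneg (hβ0 _), abs_of_nonneg (hγpos _).le]
    linarith [hsum0 (Fin.last (k + 1))]
  -- Part 2
  have part2 : logMaxNorm B ≤ 0 := by
    apply ciSup_le
    intro i
    have hrow : ∑ j ∈ Finset.univ.erase i, |B i j| ≤ β i + γ i := by
      apply sum_off_le i (β i) (γ i) (hβ0 i) (hγpos i).le
      intro j hji
      rw [hBoff i j hji]
      split_ifs with hP hQ
      · exact abs_of_nonneg (hβ0 i)
      · exact abs_of_nonneg (hγpos i).le
      · exact abs_zero
    rw [hBdiag i]
    linarith [hsum0 i]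
  -- Part 1: invertibility via weighted strict diagonal dominance
  have part1 : IsUnit B.det := by
    rw [isUnit_iff_ne_zero]
    set K : ℝ := 1 + ∑ j : Fin (k + 2), β j / γ j with hK
    have hK1 : 1 ≤ K := by
      have : 0 ≤ ∑ j : Fin (k + 2), β j / γ j :=
        Finset.sum_nonneg fun j _ => div_nonneg (hβ0 j) (hγpos j).le
      rw [hK]; linarith
    have hKpos : 0 < K := by linarith
    have hKβγ : ∀ i : Fin (k + 2), β i < K * γ i := by
      intro i
      have h1 : β i / γ i ≤ ∑ j : Fin (k + 2), β j / γ j :=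
        Finset.single_le_sum (fun j _ => div_nonneg (hβ0 j) (hγpos j).le) (Finset.mem_univ i)
      have h2 : β i / γ i < K := by rw [hK]; linarith
      rw [div_lt_iff₀ (hγpos i)] at h2
      linarith [h2]
    set g : ℕ → ℝ := fun n => 1 + ∑ j ∈ Finset.Ico n (k + 2), K ^ j with hg
    have hgpos : ∀ n, 0 < g n := by
      intro n
      have : 0 ≤ ∑ j ∈ Finset.Ico n (k + 2), K ^ j :=
        Finset.sum_nonneg fun j _ => pow_nonneg hKpos.le j
      simp only [hg]; linarith
    have hgdiff : ∀ n, n < k + 2 → g n - g (n + 1) = K ^ n := by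
      intro n hn
      simp only [hg]
      rw [Finset.sum_eq_sum_Ico_succ_bot hn]
      ring
    set w : Fin (k + 2) → ℝ := fun j => g (j : ℕ) with hw
    set C : Matrix (Fin (k + 2)) (Fin (k + 2)) ℝ := B * Matrix.diagonal w with hC
    have hCdet : C.det ≠ 0 := by
      apply det_ne_zero_of_sum_row_lt_diag
      intro i
      set n : ℕ := (i : ℕ) with hn
      have hnlt : n < k + 2 := i.isLt
      -- bound the off-diagonal sum
      have hrow : ∑ j ∈ Finset.univ.erase i, ‖C i j‖ ≤
          β i * g (n - 1) + γ i * g (n + 1) := by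
        apply sum_off_le i _ _ (mul_nonneg (hβ0 i) (hgpos _).le)
          (mul_nonneg (hγpos i).le (hgpos _).le)
        intro j hji
        have hCij : C i j = B i j * w j := Matrix.mul_diagonal w B i j
        rw [hCij, hBoff i j hji]
        split_ifs with hP hQ
        · have hjv : (j : ℕ) = n - 1 := by omega
          rw [Real.norm_eq_abs, abs_mul, abs_of_nonneg (hβ0 i),
            abs_of_pos (hgpos _)]
          simp only [hw, hjv]
        · have hjv : (j : ℕ) = n + 1 := hQ
          rw [Real.norm_eq_abs, abs_mul, abs_of_nonneg (hγpos i).le,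
            abs_of_pos (hgpos _)]
          simp only [hw, hjv]
        · simp
      -- diagonal entry
      have hCdiagv : ‖C i i‖ = (β i + γ i) * g n := by
        have hCii : C i i = B i i * w i := Matrix.mul_diagonal w B i i
        have hBii : B i i = -(β i + γ i) := by rw [hBdiag i]; linarith [hsum0 i]
        rw [hCii, hBii, Real.norm_eq_abs, abs_mul, abs_neg,
          abs_of_nonneg (by linarith [hβ0 i, hγpos i] : (0:ℝ) ≤ β i + γ i),
          abs_of_pos (hgpos _)]
      rw [hCdiagv]
      refine lt_of_le_of_lt hrow ?_
      -- the strict weighted inequality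
      rcases Nat.eq_zero_or_pos n with h0 | h1
      · rw [h0]
        have hd : g 0 - g 1 = 1 := by
          have := hgdiff 0 (by omega); simpa using this
        have h01 : (0 : ℕ) - 1 = 0 := rfl
        rw [h01, zero_add]
        have := hγpos i
        have := hβ0 i
        nlinarith [hgpos 1, hgpos 0]
      · have hd1 : g (n - 1) - g n = K ^ (n - 1) := by
          have := hgdiff (n - 1) (by omega)
          have hnn : n - 1 + 1 = n := by omega
          rwa [hnn] at this
        have hd2 : g n - g (n + 1) = K ^ n := by exact hgdiff n hnlt
        have hKn : K ^ n = K * K ^ (n - 1) := by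
          conv_lhs => rw [show n = (n - 1) + 1 by omega]
          rw [pow_succ]; ring
        have hKp : 0 < K ^ (n - 1) := pow_pos hKpos _
        have hβK := hKβγ i
        have := hβ0 i
        have := hγpos i
        nlinarith
    have hdet : C.det = B.det * ∏ j : Fin (k + 2), w j := by
      rw [hC, Matrix.det_mul, Matrix.det_diagonal]
    intro hB0
    rw [hdet, hB0, zero_mul] at hCdet
    exact hCdet rfl
  exact ⟨part1, part2, part3⟩
end

section
/- For every n ≥ 1, ‖φ(Δt C)^n‖_∞ = x^n + (1 − x^n)·2S/h, where x = φ(−rΔt) = (1 − (1−θ)rΔt)/(1 + θ rΔt). -/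
/-- `φ(Δt X) = (I − θΔt X)⁻¹ (I + (1−θ)Δt X)`. -/
noncomputable def phiM {ι : Type*} [Fintype ι] [DecidableEq ι] (θ dt : ℝ)
    (X : Matrix ι ι ℝ) : Matrix ι ι ℝ :=
  (1 - (θ * dt) • X)⁻¹ * (1 + ((1 - θ) * dt) • X)

namespace IsIdempotentElem

variable {R A : Type*} [CommRing R] [Ring A] [Algebra R A] {e : A}

theorem one_sub_add_smul_mul (he : IsIdempotentElem e) (x y : R) :
    (1 - e + x • e) * (1 - e + y • e) = 1 - e + (x * y) • e := by
  simp only [mul_add, add_mul, mul_sub, sub_mul, one_mul, mul_one, smul_mul_assoc,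
    mul_smul_comm, smul_smul, he.eq, sub_self, zero_add]
  module

theorem one_sub_add_smul_pow (he : IsIdempotentElem e) (x : R) (n : ℕ) :
    (1 - e + x • e) ^ n = 1 - e + (x ^ n) • e := by
  induction n with
  | zero => simp
  | succ n ih => rw [pow_succ, ih, he.one_sub_add_smul_mul, pow_succ]

end IsIdempotentElem

theorem Matrix.isIdempotentElem_replicateRow_s15 {ι K : Type*} [Fintype ι] [CommSemiring K]
    {v : ι → K} (hv : ∑ j, v j = 1) : IsIdempotentElem (Matrix.replicateRow ι v) := by
  ext i k
  simp [Matrix.mul_apply, ← Finset.sum_mul, hv]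

theorem Matrix.inv_one_sub_add_smul {ι K : Type*} [Fintype ι] [DecidableEq ι] [Field K]
    {P : Matrix ι ι K} (hP : IsIdempotentElem P) {d : K} (hd : d ≠ 0) :
    (1 - P + d • P)⁻¹ = 1 - P + d⁻¹ • P :=
  Matrix.inv_eq_left_inv <| by
    rw [hP.one_sub_add_smul_mul, inv_mul_cancel₀ hd, one_smul, sub_add_cancel]

theorem phiM_neg_smul_of_isIdempotentElem {ι : Type*} [Fintype ι] [DecidableEq ι]
    {P : Matrix ι ι ℝ} (hP : IsIdempotentElem P) {θ dt r : ℝ} (hd : 1 + θ * r * dt ≠ 0) :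
    phiM θ dt ((-r) • P) = 1 - P + ((1 - (1 - θ) * r * dt) / (1 + θ * r * dt)) • P := by
  have hden : 1 - (θ * dt) • ((-r) • P) = 1 - P + (1 + θ * r * dt) • P := by module
  have hnum : 1 + ((1 - θ) * dt) • ((-r) • P) = 1 - P + (1 - (1 - θ) * r * dt) • P := by
    module
  rw [phiM, hden, hnum, Matrix.inv_one_sub_add_smul hP hd, hP.one_sub_add_smul_mul, div_eq_inv_mul]

theorem ciSup_fin_two {α : Type*} [ConditionallyCompleteLinearOrder α] (f : Fin 2 → α) :
    ⨆ i, f i = max (f 0) (f 1) := by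
  rw [← Finset.sup'_univ_eq_ciSup]
  simp [Fin.univ_succ]

theorem matMaxNorm_fin_two (X : Matrix (Fin 2) (Fin 2) ℝ) :
    matMaxNorm X = max (|X 0 0| + |X 0 1|) (|X 1 0| + |X 1 1|) := by
  simp only [matMaxNorm, ciSup_fin_two, Fin.sum_univ_two]

theorem matMaxNorm_one_sub_add_smul_replicateRow {a z : ℝ} (ha : 1 ≤ a) (hz : z ≤ 1) :
    matMaxNorm (1 - Matrix.replicateRow (Fin 2) ![a, 1 - a]
      + z • Matrix.replicateRow (Fin 2) ![a, 1 - a]) = z + (1 - z) * (2 * a) := by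
  have hy : 0 ≤ 1 - z := by linarith
  have hya : 0 ≤ (1 - z) * a := mul_nonneg hy (by linarith)
  have hya1 : 0 ≤ (1 - z) * (a - 1) := mul_nonneg hy (by linarith)
  have row0 : |1 - (1 - z) * a| ≤ 1 + (1 - z) * a := abs_le.2 ⟨by linarith, by linarith⟩
  have hM : 1 - Matrix.replicateRow (Fin 2) ![a, 1 - a]
      + z • Matrix.replicateRow (Fin 2) ![a, 1 - a]
      = !![1 - (1 - z) * a, (1 - z) * (a - 1); -((1 - z) * a), 1 + (1 - z) * (a - 1)] := by
    ext i j
    fin_cases i <;> fin_cases j <;> simp <;> ring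
  rw [hM, matMaxNorm_fin_two]
  simp only [Matrix.of_apply, Matrix.cons_val', Matrix.cons_val_zero, Matrix.cons_val_one,
    Matrix.empty_val', Matrix.cons_val_fin_one]
  rw [abs_neg, abs_of_nonneg hya, abs_of_nonneg hya1,
    abs_of_nonneg (by linarith : 0 ≤ 1 + (1 - z) * (a - 1)), max_eq_right (by linarith)]
  ring

theorem abs_theta_ratio_le_one {θ z : ℝ} (hθ : 1 / 2 ≤ θ) (hz : 0 ≤ z) :
    |(1 - (1 - θ) * z) / (1 + θ * z)| ≤ 1 := by
  have hd : 0 < 1 + θ * z := by nlinarith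
  rw [abs_div, abs_of_pos hd, div_le_one hd, abs_le]
  constructor <;> nlinarith

/-- For every `n ≥ 1`, `‖φ(Δt C)^n‖_∞ = x^n + (1 − x^n)·2S/h`, where
`x = φ(−rΔt) = (1 − (1−θ)rΔt)/(1 + θrΔt)`. -/
theorem statement15 (r spen S : ℝ) (hr : 0 < r) (hspen : 0 < spen) (hsS : spen < S)
    (θ dt : ℝ) (hθ : θ ∈ Set.Icc (1/2 : ℝ) 1) (hdt : 0 < dt)
    (C : Matrix (Fin 2) (Fin 2) ℝ) (hC : C = Cmat r spen S (S - spen))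
    (x : ℝ) (hx : x = (1 - (1 - θ) * r * dt) / (1 + θ * r * dt)) :
    ∀ n : ℕ, 1 ≤ n →
      matMaxNorm ((phiM θ dt C) ^ n) =
        x ^ n + (1 - x ^ n) * (2 * S / (S - spen)) := by
  intro n _
  have hh : 0 < S - spen := sub_pos.2 hsS
  set P := Matrix.replicateRow (Fin 2) ![S / (S - spen), 1 - S / (S - spen)]
  have hCP : C = (-r) • P := by
    subst hC
    ext i j
    fin_cases i <;> fin_cases j <;> simp [Cmat, P] <;> field_simp <;> ring
  have hP : IsIdempotentElem P := Matrix.isIdempotentElem_replicateRow_s15 (by simp)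
  have hrdt : 0 ≤ r * dt := by positivity
  have hd : 1 + θ * r * dt ≠ 0 := by nlinarith [hθ.1]
  have hphi : phiM θ dt C = 1 - P + x • P := by
    rw [hCP, phiM_neg_smul_of_isIdempotentElem hP hd, hx]
  have hxn : x ^ n ≤ 1 := by
    have hx1 : |x| ≤ 1 := by
      rw [hx, mul_assoc, mul_assoc]
      exact abs_theta_ratio_le_one hθ.1 hrdt
    exact (le_abs_self _).trans ((abs_pow x n).trans_le (pow_le_one₀ (abs_nonneg x) hx1))
  have ha : 1 ≤ S / (S - spen) := (one_le_div hh).2 (by linarith)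
  rw [hphi, hP.one_sub_add_smul_pow, matMaxNorm_one_sub_add_smul_replicateRow ha hxn,
    mul_div_assoc]
end
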